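/- arXiv:1507.01096 — 4 statements merged into one kernel-verified Lean document; each statement's English description precedes it below -/
import Mathlib

section
/- Every element of (ℤ/nℤ) ⊕ (ℤ/nℤ) is an integer multiple of a basis element, i.e., for every g in (ℤ/nℤ) ⊕ (ℤ/nℤ) there exists an element v which is part of a generating pair (a basis of the group as a ℤ/nℤ-module) and an integer d such that g = d·v. -/
/-! Lift `g` to an integer pair `(a, b)` and write it as `d • (x, y)` with `d = gcd a b`, so that
`x` and `y` are coprime. A Bézout relation `u * x + s * y = 1` makes `(x, y), (-s, u)` a pair of
determinant one, hence a basis of `R × R` over any commutative ring `R`, in particular `ZMod n`. -/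

theorem bijective_smul_add_smul_of_mul_sub_mul_eq_one {R : Type*} [CommRing R] {a b c d : R}
    (h : a * d - c * b = 1) :
    Function.Bijective (fun p : R × R => p.1 • (a, b) + p.2 • (c, d)) := by
  rw [Function.bijective_iff_has_inverse]
  refine ⟨fun q => (d * q.1 - c * q.2, a * q.2 - b * q.1), fun p => ?_, fun q => ?_⟩
  · simp only [Prod.smul_mk, smul_eq_mul, Prod.mk_add_mk, Prod.ext_iff]
    constructor
    · linear_combination p.1 * h
    · linear_combination p.2 * h
  · simp only [Prod.smul_mk, smul_eq_mul, Prod.mk_add_mk, Prod.ext_iff]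
    constructor
    · linear_combination q.1 * h
    · linear_combination q.2 * h

theorem exists_eq_mul_isCoprime {R : Type*} [EuclideanDomain R] [GCDMonoid R]
    (p q : R) : ∃ d x y : R, IsCoprime x y ∧ p = d * x ∧ q = d * y := by
  by_cases hpq : gcd p q = 0
  · obtain ⟨rfl, rfl⟩ := (gcd_eq_zero_iff p q).mp hpq
    exact ⟨0, 1, 0, isCoprime_one_left, by simp, by simp⟩
  · exact ⟨gcd p q, p / gcd p q, q / gcd p q, isCoprime_div_gcd_div_gcd_of_gcd_ne_zero hpq,
      (EuclideanDomain.mul_div_cancel' hpq (gcd_dvd_left p q)).symm,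
      (EuclideanDomain.mul_div_cancel' hpq (gcd_dvd_right p q)).symm⟩

/-- Every element of `(ℤ/nℤ) ⊕ (ℤ/nℤ)` is an integer multiple of a basis element,
i.e. of an element `v` which is part of a pair `v, w` for which
`(x, y) ↦ x • v + y • w` is a bijection. -/
theorem stmt_1 (n : ℕ) (g : ZMod n × ZMod n) :
    ∃ v w : ZMod n × ZMod n,
      Function.Bijective (fun p : ZMod n × ZMod n => p.1 • v + p.2 • w) ∧
      ∃ d : ℤ, g = d • v := by
  obtain ⟨a, ha⟩ := ZMod.intCast_surjective g.1
  obtain ⟨b, hb⟩ := ZMod.intCast_surjective g.2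
  obtain ⟨d, x, y, ⟨u, s, hbezout⟩, rfl, rfl⟩ := exists_eq_mul_isCoprime a b
  refine ⟨((x : ZMod n), (y : ZMod n)), (-(s : ZMod n), (u : ZMod n)),
    bijective_smul_add_smul_of_mul_sub_mul_eq_one ?_, d, ?_⟩
  · have hbezout_mod := congrArg (Int.cast : ℤ → ZMod n) hbezout
    push_cast at hbezout_mod
    linear_combination hbezout_mod
  · ext <;> simp [← ha, ← hb, zsmul_eq_mul]
end

section
/- The set H₁ = {±(1,0), ±(0,1), ±(1,2), ±(2,1)} is a nonseparating subset of ℤ/4ℤ ⊕ ℤ/4ℤ. -/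
def middleTwoEq (c : Fin 4 → ℕ) : Prop :=
  (Multiset.sort {c 0, c 1, c 2, c 3} (· ≤ ·)).getD 1 0 =
  (Multiset.sort {c 0, c 1, c 2, c 3} (· ≤ ·)).getD 2 0

/-- `c` is the coset number of the pair `{x, -x}` relative to `B` and the
generator `a + B` of `A ⧸ B`: `0 ≤ c ≤ n/2` and `(c • a + B) ∩ {x, -x} ≠ ∅`. -/
def IsCosetNum {A : Type*} [AddCommGroup A] (B : AddSubgroup A) (a x : A) (c : ℕ) : Prop :=
  c ≤ Nat.card (A ⧸ B) / 2 ∧ (x - c • a ∈ B ∨ x + c • a ∈ B)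

/-- The four pairs `{± h i}` are disjoint and for every cyclic subgroup `B` with
cyclic quotient and every generator of the quotient, the middle two of the four
coset numbers agree. -/
def NonsepTuple {A : Type*} [AddCommGroup A] (h : Fin 4 → A) : Prop :=
  (∀ i j : Fin 4, i ≠ j → h i ≠ h j ∧ h i ≠ -h j) ∧
  ∀ B : AddSubgroup A, IsAddCyclic B → IsAddCyclic (A ⧸ B) →
    ∀ a : A, (∀ x : A ⧸ B, x ∈ AddSubgroup.zmultiples ((QuotientAddGroup.mk a : A ⧸ B))) →
      ∀ c : Fin 4 → ℕ, (∀ i, IsCosetNum B a (h i) (c i)) → middleTwoEq c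

/-- `H` is a nonseparating subset of `A`. -/
def IsNonseparating {A : Type*} [AddCommGroup A] (H : Set A) : Prop :=
  ∃ h : Fin 4 → A, H = (⋃ i, {h i, -h i}) ∧ NonsepTuple h

/-!
Write `B = ⟨g⟩`. Since `a + B` generates `A ⧸ B`, the elements `a` and `g` generate
`A = (ℤ/4)²`, hence form a basis, and the coset number of `x` is `|φ x|`, where `φ : A → ℤ/4` is
the coordinate along `a` and `|·|` folds `ℤ/4` onto `{0, 1, 2}`. With `α = φ (1,0)` and
`β = φ (0,1)`, one of which is odd, the four values of `φ` are `α, β, α + 2β, 2α + β`, so the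
coset numbers are `0, 1, 1, 2` in some order, or `1, 1, 1, 1`. As `|A ⧸ B| ≤ 4`, all coset numbers
are at most `2`, and this becomes a finite check over `g`, `a` and the coset numbers.
-/

section Torsion

variable {G : Type*} [AddGroup G] {n : ℕ}

theorem zsmul_eq_zsmul_emod (hG : ∀ x : G, n • x = 0) (k : ℤ) (g : G) :
    k • g = (k % n) • g := by
  conv_lhs => rw [← Int.emod_add_mul_ediv k n]
  rw [add_zsmul, mul_comm, mul_zsmul, natCast_zsmul, hG, zsmul_zero, add_zero]

theorem mem_zmultiples_iff_exists_fin (hn : 0 < n) (hG : ∀ x : G, n • x = 0) {g x : G} :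
    x ∈ AddSubgroup.zmultiples g ↔ ∃ m : Fin n, (m : ℕ) • g = x := by
  refine ⟨fun hx => ?_, fun ⟨m, hm⟩ => ⟨m, by simpa using hm⟩⟩
  obtain ⟨k, rfl⟩ := AddSubgroup.mem_zmultiples_iff.mp hx
  have hk₀ : 0 ≤ k % n := Int.emod_nonneg k (by omega)
  have hk₁ : k % n < n := Int.emod_lt_of_pos k (by omega)
  refine ⟨⟨(k % n).toNat, by omega⟩, ?_⟩
  rw [zsmul_eq_zsmul_emod hG k, ← natCast_zsmul, Int.toNat_of_nonneg hk₀]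

end Torsion

section Quotient

variable {A : Type*} [AddCommGroup A] {B : AddSubgroup A} {n : ℕ}

theorem nsmul_quotient_eq_zero (hA : ∀ x : A, n • x = 0) (x : A ⧸ B) : n • x = 0 := by
  induction x using QuotientAddGroup.induction_on with
  | H x => rw [← QuotientAddGroup.mk_nsmul, hA, QuotientAddGroup.mk_zero]

theorem card_quotient_le_of_nsmul_eq_zero [IsAddCyclic (A ⧸ B)] (hn : 0 < n)
    (hA : ∀ x : A, n • x = 0) : Nat.card (A ⧸ B) ≤ n := by
  rw [← IsAddCyclic.exponent_eq_card]
  exact Nat.le_of_dvd hn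
    (AddMonoid.exponent_dvd_of_forall_nsmul_eq_zero (nsmul_quotient_eq_zero hA))

theorem exists_fin_sub_nsmul_mem (hn : 0 < n) (hA : ∀ x : A, n • x = 0) {a : A}
    (ha : ∀ x : A ⧸ B, x ∈ AddSubgroup.zmultiples (QuotientAddGroup.mk a : A ⧸ B)) (y : A) :
    ∃ k : Fin n, y - (k : ℕ) • a ∈ B := by
  obtain ⟨k, hk⟩ := (mem_zmultiples_iff_exists_fin hn (nsmul_quotient_eq_zero hA)).mp (ha y)
  refine ⟨k, ?_⟩
  rwa [← QuotientAddGroup.mk_nsmul, QuotientAddGroup.eq, neg_add_eq_sub] at hk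

end Quotient

theorem middleTwoEq_of_multiset_eq {c : Fin 4 → ℕ} {a b d : ℕ} (hab : a ≤ b) (hbd : b ≤ d)
    (h : ({c 0, c 1, c 2, c 3} : Multiset ℕ) = {a, b, b, d}) : middleTwoEq c := by
  have hsort : Multiset.sort ({c 0, c 1, c 2, c 3} : Multiset ℕ) (· ≤ ·) = [a, b, b, d] := by
    refine List.Perm.eq_of_pairwise' (Multiset.pairwise_sort _ _)
      (by simp [hab, hbd, hab.trans hbd]) ?_
    rw [← Multiset.coe_eq_coe, Multiset.sort_eq, h]
    rfl
  unfold middleTwoEq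
  rw [hsort]
  rfl

def pairRepsH₁ : Fin 4 → ZMod 4 × ZMod 4 := ![(1, 0), (0, 1), (1, 2), (2, 1)]

/-- Decidable form of `IsCosetNum (AddSubgroup.zmultiples g) a x c` without the bound on `c`. -/
abbrev IsCosetNumMod (g a x : ZMod 4 × ZMod 4) (c : ℕ) : Prop :=
  (∃ m : Fin 4, (m : ℕ) • g = x - c • a) ∨ (∃ m : Fin 4, (m : ℕ) • g = x + c • a)

set_option synthInstance.maxSize 1000 in
theorem cosetNums_pairRepsH₁ : ∀ g a : ZMod 4 × ZMod 4,
    (∀ y : ZMod 4 × ZMod 4, ∃ k m : Fin 4, (k : ℕ) • a + (m : ℕ) • g = y) →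
    ∀ c₀ : Fin 3, IsCosetNumMod g a (1, 0) c₀ → ∀ c₁ : Fin 3, IsCosetNumMod g a (0, 1) c₁ →
    ∀ c₂ : Fin 3, IsCosetNumMod g a (1, 2) c₂ → ∀ c₃ : Fin 3, IsCosetNumMod g a (2, 1) c₃ →
      ({(c₀ : ℕ), (c₁ : ℕ), (c₂ : ℕ), (c₃ : ℕ)} : Multiset ℕ) = {0, 1, 1, 2} ∨
        ({(c₀ : ℕ), (c₁ : ℕ), (c₂ : ℕ), (c₃ : ℕ)} : Multiset ℕ) = {1, 1, 1, 1} := by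
  decide +kernel

/-- `H₁ = {±(1,0), ±(0,1), ±(1,2), ±(2,1)}` is a nonseparating subset of `ℤ/4ℤ ⊕ ℤ/4ℤ`. -/
theorem stmt_7 :
    IsNonseparating ({(1, 0), -(1, 0), (0, 1), -(0, 1), (1, 2), -(1, 2), (2, 1), -(2, 1)} :
      Set (ZMod 4 × ZMod 4)) := by
  have hA : ∀ x : ZMod 4 × ZMod 4, 4 • x = 0 := by decide
  refine ⟨pairRepsH₁, ?_, by decide, ?_⟩
  · ext x
    simp [Fin.exists_fin_succ, pairRepsH₁]
    tauto
  intro B hB hQ a ha c hc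
  obtain ⟨g, rfl⟩ := B.isAddCyclic_iff_exists_zmultiples_eq_top.mp hB
  have hmem (x : ZMod 4 × ZMod 4) :
      x ∈ AddSubgroup.zmultiples g ↔ ∃ m : Fin 4, (m : ℕ) • g = x :=
    mem_zmultiples_iff_exists_fin (by norm_num) hA
  have hgen (y : ZMod 4 × ZMod 4) : ∃ k m : Fin 4, (k : ℕ) • a + (m : ℕ) • g = y := by
    obtain ⟨k, hk⟩ := exists_fin_sub_nsmul_mem (by norm_num) hA ha y
    obtain ⟨m, hm⟩ := (hmem _).mp hk
    exact ⟨k, m, by rw [hm]; abel⟩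
  have hc_lt (i : Fin 4) : c i < 3 := by
    have := card_quotient_le_of_nsmul_eq_zero (B := AddSubgroup.zmultiples g) (by norm_num) hA
    have := (hc i).1
    omega
  have hc_mod (i : Fin 4) : IsCosetNumMod g a (pairRepsH₁ i) (c i) := by
    simpa only [hmem] using (hc i).2
  rcases cosetNums_pairRepsH₁ g a hgen ⟨c 0, hc_lt 0⟩ (hc_mod 0) ⟨c 1, hc_lt 1⟩ (hc_mod 1)
      ⟨c 2, hc_lt 2⟩ (hc_mod 2) ⟨c 3, hc_lt 3⟩ (hc_mod 3) with h | h <;>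
    exact middleTwoEq_of_multiset_eq (b := 1) (by norm_num) (by norm_num) h
end

section
/- Let A be a finite abelian group and A' a subgroup of A. Every subset of A' which is nonseparating for A' is also nonseparating for A. -/
theorem Multiset.sort_map_of_monotone {α β : Type*} [LinearOrder α] [LinearOrder β] {f : α → β}
    (hf : Monotone f) (s : Multiset α) :
    (s.map f).sort (· ≤ ·) = (s.sort (· ≤ ·)).map f :=
  List.Perm.eq_of_pairwise' (Multiset.pairwise_sort _ _)
    ((Multiset.pairwise_sort _ _).map f fun _ _ h => hf h)
    (by rw [← Multiset.coe_eq_coe, Multiset.sort_eq, ← Multiset.map_coe, Multiset.sort_eq])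

theorem middleTwoEq.comp_of_monotone {f : ℕ → ℕ} (hf : Monotone f) {d : Fin 4 → ℕ}
    (hd : middleTwoEq d) : middleTwoEq (f ∘ d) := by
  have hmap : ({f (d 0), f (d 1), f (d 2), f (d 3)} : Multiset ℕ) =
      ({d 0, d 1, d 2, d 3} : Multiset ℕ).map f := by simp
  unfold middleTwoEq at hd ⊢
  simp only [Function.comp_apply, hmap, Multiset.sort_map_of_monotone hf]
  have hlen : (Multiset.sort ({d 0, d 1, d 2, d 3} : Multiset ℕ) (· ≤ ·)).length = 4 := by
    rw [Multiset.length_sort]; rfl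
  generalize Multiset.sort ({d 0, d 1, d 2, d 3} : Multiset ℕ) (· ≤ ·) = l at hd hlen ⊢
  match l, hlen with
  | [_, _, _, _], _ => exact congrArg f hd

section Cyclic

variable {G : Type*} [AddGroup G] [Finite G] {g : G}

theorem card_div_card_dvd_of_nsmul_mem (hg : ∀ x, x ∈ AddSubgroup.zmultiples g)
    (K : AddSubgroup G) {c : ℕ} (hc : c • g ∈ K) :
    Nat.card G / Nat.card K ∣ c := by
  have hzero : (Nat.card K * c) • g = 0 := by
    rw [mul_comm, mul_nsmul]
    exact congrArg Subtype.val (card_nsmul_eq_zero' (x := (⟨c • g, hc⟩ : K)))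
  have hdvd : Nat.card G ∣ Nat.card K * c := by
    rw [← addOrderOf_eq_card_of_forall_mem_zmultiples hg]
    exact addOrderOf_dvd_of_nsmul_eq_zero hzero
  rw [← Nat.div_mul_cancel K.card_addSubgroup_dvd_card, mul_comm] at hdvd
  exact Nat.dvd_of_mul_dvd_mul_left Nat.card_pos hdvd

theorem eq_zmultiples_card_div_card_nsmul (hg : ∀ x, x ∈ AddSubgroup.zmultiples g)
    (K : AddSubgroup G) :
    K = AddSubgroup.zmultiples ((Nat.card G / Nat.card K) • g) := by
  have hKG := K.card_addSubgroup_dvd_card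
  refine AddSubgroup.eq_of_le_of_card_ge (fun x hx => ?_) ?_
  · obtain ⟨c, rfl⟩ := (AddSubmonoid.mem_multiples_iff _ _).mp
      (mem_multiples_iff_mem_zmultiples.mpr (hg x))
    obtain ⟨d, rfl⟩ := card_div_card_dvd_of_nsmul_mem hg K hx
    exact ⟨d, by simp only [natCast_zsmul, ← mul_nsmul', mul_comm]⟩
  · rw [Nat.card_zmultiples, addOrderOf_nsmul, addOrderOf_eq_card_of_forall_mem_zmultiples hg,
      Nat.gcd_eq_right (Nat.div_dvd_of_dvd hKG), Nat.div_div_self hKG Nat.card_pos.ne']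

end Cyclic

theorem QuotientAddGroup.mem_zmultiples_mk_of_range_eq {M N : Type*} [AddGroup M] [AddGroup N]
    (φ : M →+ N) {a : M} (ha : φ.range = AddSubgroup.zmultiples (φ a)) (x : M ⧸ φ.ker) :
    x ∈ AddSubgroup.zmultiples (a : M ⧸ φ.ker) := by
  induction x using QuotientAddGroup.induction_on with
  | H y =>
    obtain ⟨t, ht⟩ : φ y ∈ AddSubgroup.zmultiples (φ a) := ha ▸ ⟨y, rfl⟩
    refine ⟨t, ?_⟩
    change t • φ a = φ y at ht
    change t • (a : M ⧸ φ.ker) = y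
    rw [← QuotientAddGroup.mk_zsmul, QuotientAddGroup.eq_iff_sub_mem, φ.sub_mem_ker_iff,
      map_zsmul, ht]

theorem IsCosetNum.mk_eq_or {A : Type*} [AddCommGroup A] {B : AddSubgroup A} {a x : A} {c : ℕ}
    (h : IsCosetNum B a x c) :
    (x : A ⧸ B) = c • (a : A ⧸ B) ∨ (x : A ⧸ B) = -(c • (a : A ⧸ B)) := by
  simp only [← QuotientAddGroup.mk_nsmul, ← QuotientAddGroup.mk_neg,
    QuotientAddGroup.eq_iff_sub_mem, sub_neg_eq_add]
  exact h.2

theorem exists_isCosetNum_ker {M G : Type*} [AddCommGroup M] [AddGroup G] [Finite G] {g : G}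
    (hg : ∀ y, y ∈ AddSubgroup.zmultiples g) (φ : M →+ G) {a x : M} {c : ℕ}
    (ha : φ a = (Nat.card G / Nat.card φ.range) • g) (hc : c ≤ Nat.card G / 2)
    (hx : φ x = c • g ∨ φ x = -(c • g)) :
    ∃ d, c = Nat.card G / Nat.card φ.range * d ∧ IsCosetNum φ.ker a x d := by
  have hcg : c • g ∈ φ.range := by
    rcases hx with hx | hx
    · exact hx ▸ ⟨x, rfl⟩
    · exact neg_neg (c • g) ▸ hx ▸ neg_mem ⟨x, rfl⟩
  obtain ⟨d, rfl⟩ := card_div_card_dvd_of_nsmul_mem hg φ.range hcg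
  refine ⟨d, rfl, ?_, ?_⟩
  · have hdvd := φ.range.card_addSubgroup_dvd_card
    have hk : 0 < Nat.card G / Nat.card φ.range :=
      Nat.div_pos (Nat.le_of_dvd Nat.card_pos hdvd) Nat.card_pos
    rw [Nat.card_congr (QuotientAddGroup.quotientKerEquivRange φ).toEquiv]
    have hc' : Nat.card G / Nat.card φ.range * d * 2 ≤
        Nat.card G / Nat.card φ.range * Nat.card φ.range := by
      rw [Nat.div_mul_cancel hdvd]
      exact (Nat.le_div_iff_mul_le two_pos).mp hc
    rw [Nat.le_div_iff_mul_le two_pos]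
    exact Nat.le_of_mul_le_mul_left (by linarith) hk
  · have hda : φ (d • a) = (Nat.card G / Nat.card φ.range * d) • g := by
      rw [map_nsmul, ha, ← mul_nsmul', mul_comm]
    rcases hx with hx | hx
    · exact Or.inl (by rw [φ.sub_mem_ker_iff, hda, hx])
    · exact Or.inr (by rw [← sub_neg_eq_add, φ.sub_mem_ker_iff, map_neg, hda, hx])

theorem NonsepTuple.map {A' A : Type*} [AddCommGroup A'] [AddCommGroup A] [Finite A]
    {h : Fin 4 → A'} (hh : NonsepTuple h) (f : A' →+ A) (hf : Function.Injective f) :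
    NonsepTuple (f ∘ h) := by
  obtain ⟨hdisj, hmid⟩ := hh
  refine ⟨fun i j hij => ⟨hf.ne (hdisj i j hij).1, ?_⟩, fun B hB _ a ha c hc => ?_⟩
  · change f (h i) ≠ -f (h j)
    rw [← map_neg]
    exact hf.ne (hdisj i j hij).2
  set φ := (QuotientAddGroup.mk' B).comp f
  set k := Nat.card (A ⧸ B) / Nat.card φ.range
  have hK := eq_zmultiples_card_div_card_nsmul ha φ.range
  obtain ⟨a', ha'⟩ : k • (a : A ⧸ B) ∈ φ.range := hK.ge (AddSubgroup.mem_zmultiples _)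
  have hker : φ.ker = B.comap f := by
    rw [← AddMonoidHom.comap_ker, QuotientAddGroup.ker_mk']
  have hkerCyclic : IsAddCyclic φ.ker := hker ▸ isAddCyclic_of_injective (f.addSubgroupComap B)
    fun x y hxy => Subtype.ext (hf (congrArg Subtype.val hxy))
  have hgen := QuotientAddGroup.mem_zmultiples_mk_of_range_eq φ (a := a') (by rw [ha']; exact hK)
  choose d hcd hd using fun i => exists_isCosetNum_ker ha φ ha' (hc i).1 (hc i).mk_eq_or
  rw [funext hcd]
  exact middleTwoEq.comp_of_monotone (f := (k * ·)) (fun _ _ => Nat.mul_le_mul_left k)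
    (hmid φ.ker hkerCyclic ⟨⟨_, hgen⟩⟩ a' hgen d hd)

/-- A subset of a subgroup `A'` of a finite abelian group `A` which is nonseparating
for `A'` is nonseparating for `A`. -/
theorem stmt_10 {A : Type*} [AddCommGroup A] [Finite A] (A' : AddSubgroup A)
    (H : Set A') (hH : IsNonseparating H) :
    IsNonseparating ((Subtype.val) '' H : Set A) := by
  obtain ⟨h, rfl, hh⟩ := hH
  refine ⟨A'.subtype ∘ h, ?_, hh.map A'.subtype Subtype.val_injective⟩
  simp [Set.image_iUnion, Set.image_insert_eq]
end

section
/- Let N = p₁^{k₁} ⋯ p_n^{k_n} where each prime pᵢ ≥ 13. Let A = ℤ/aℤ ⊕ ℤ/bℤ with a | b, ab = N, and a > 1. If D ⊆ A has at most 12 elements, then there exists a cyclic subgroup G of A such that G ∩ D ⊆ {0} and A/G is cyclic. -/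
section aux

variable (a b : ℕ)

noncomputable def myIota (hab : a ∣ b) : ZMod a →+ ZMod b :=
  ZMod.lift a ⟨zmultiplesHom (ZMod b) ((b / a : ℕ) : ZMod b), by
    show (a : ℤ) • ((b / a : ℕ) : ZMod b) = 0
    rw [zsmul_eq_mul]
    push_cast
    rw [← Nat.cast_mul, Nat.mul_div_cancel' hab, ZMod.natCast_self]⟩

theorem myIota_apply (hab : a ∣ b) [NeZero a] (x : ZMod a) :
    myIota a b hab x = ((x.val * (b / a) : ℕ) : ZMod b) := by
  conv_lhs => rw [← ZMod.natCast_zmod_val x]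
  rw [show ((x.val : ℕ) : ZMod a) = ((x.val : ℤ) : ZMod a) by push_cast; ring]
  rw [myIota, ZMod.lift_coe]
  show (x.val : ℤ) • ((b / a : ℕ) : ZMod b) = _
  rw [zsmul_eq_mul]
  push_cast
  ring

noncomputable def myPhi (hab : a ∣ b) (c : ℕ) : (ZMod a × ZMod b) →+ ZMod b :=
  AddMonoidHom.snd (ZMod a) (ZMod b) -
    (c • myIota a b hab).comp (AddMonoidHom.fst (ZMod a) (ZMod b))

theorem myPhi_apply (hab : a ∣ b) (c : ℕ) (d : ZMod a × ZMod b) :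
    myPhi a b hab c d = d.2 - c • myIota a b hab d.1 := rfl

theorem myPhi_surj (hab : a ∣ b) (c : ℕ) : Function.Surjective (myPhi a b hab c) := by
  intro y
  refine ⟨(0, y), ?_⟩
  simp [myPhi_apply]

theorem mem_ker_iff (hab : a ∣ b) (c : ℕ) (d : ZMod a × ZMod b) :
    d ∈ (myPhi a b hab c).ker ↔ d.2 = c • myIota a b hab d.1 := by
  rw [AddMonoidHom.mem_ker, myPhi_apply, sub_eq_zero]

theorem ker_eq_zmultiples (hab : a ∣ b) [NeZero a] (c : ℕ) :
    (myPhi a b hab c).ker =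
      AddSubgroup.zmultiples ((1 : ZMod a), c • myIota a b hab 1) := by
  ext d
  rw [mem_ker_iff]
  have h1 : ∀ n : ℤ, n • ((1 : ZMod a)) = (n : ZMod a) := by
    intro n; rw [zsmul_eq_mul, mul_one]
  constructor
  · intro h
    refine ⟨(d.1.val : ℤ), Prod.ext ?_ ?_⟩
    · rw [Prod.smul_fst, h1]
      push_cast
      exact ZMod.natCast_zmod_val d.1
    · rw [Prod.smul_snd, smul_comm, ← map_zsmul, h1, h]
      congr 2
      push_cast
      rw [ZMod.natCast_zmod_val d.1]
  · rintro ⟨n, rfl⟩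
    rw [Prod.smul_snd, Prod.smul_fst, smul_comm, ← map_zsmul, h1]

theorem zmultiples_cyclic {A : Type*} [AddGroup A] (g : A) :
    IsAddCyclic (AddSubgroup.zmultiples g) := by
  refine ⟨⟨g, AddSubgroup.mem_zmultiples g⟩, ?_⟩
  rintro ⟨x, n, rfl⟩
  exact ⟨n, by ext; simp⟩

end aux

/-- Let `N = p₁^k₁ ⋯ pₙ^kₙ` with all primes `pᵢ ≥ 13`, and `A = ℤ/aℤ ⊕ ℤ/bℤ` with `a ∣ b`,
`ab = N`, `a > 1`. If `D ⊆ A` has at most 12 elements, then there is a cyclic subgroup `G`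
of `A` with `G ∩ D ⊆ {0}` and `A/G` cyclic. -/
theorem stmt_14 (a b : ℕ) (ha : 1 < a) (hab : a ∣ b)
    (hp : ∀ p : ℕ, p.Prime → p ∣ a * b → 13 ≤ p)
    (D : Set (ZMod a × ZMod b)) (hD : D.ncard ≤ 12) :
    ∃ G : AddSubgroup (ZMod a × ZMod b), IsAddCyclic G ∧
      IsAddCyclic ((ZMod a × ZMod b) ⧸ G) ∧ (G : Set (ZMod a × ZMod b)) ∩ D ⊆ {0} := by
  haveI : NeZero a := ⟨by omega⟩
  have hb0 : b ≠ 0 := by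
    rintro rfl
    have := hp 2 Nat.prime_two (by simp)
    omega
  haveI : NeZero b := ⟨hb0⟩
  set m := b / a with hm
  have ham : a * m = b := Nat.mul_div_cancel' hab
  have hm0 : 0 < m := Nat.div_pos (Nat.le_of_dvd (by omega) hab) (by omega)
  -- key: trivial pairwise intersection
  have key : ∀ c c' : ℕ, c' < c → c ≤ 12 → ∀ d : ZMod a × ZMod b,
      d ∈ (myPhi a b hab c).ker → d ∈ (myPhi a b hab c').ker → d = 0 := by
    intro c c' hlt hc d h1 h2
    rw [mem_ker_iff] at h1 h2
    set k := c - c' with hk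
    have hk0 : 0 < k := by omega
    have hk12 : k ≤ 12 := by omega
    have hsub : k • myIota a b hab d.1 = 0 := by
      have hcc : c • myIota a b hab d.1 = c' • myIota a b hab d.1 := by rw [← h1, ← h2]
      rw [hk, sub_nsmul _ hlt.le, hcc]
      simp
    have : ((k * (d.1.val * m) : ℕ) : ZMod b) = 0 := by
      rw [Nat.cast_mul, ← nsmul_eq_mul, ← myIota_apply a b hab, hsub]
    rw [ZMod.natCast_eq_zero_iff] at this
    have hdvd : a ∣ k * d.1.val := by
      have : a * m ∣ (k * d.1.val) * m := by rw [ham]; convert this using 1; ring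
      exact (Nat.mul_dvd_mul_iff_right hm0).mp this
    have hcop : Nat.Coprime k a := by
      by_contra hcop
      have hg1 : Nat.gcd k a ≠ 1 := hcop
      set p := (Nat.gcd k a).minFac with hpdef
      have hgne : Nat.gcd k a ≠ 0 := by
        intro h
        exact absurd (Nat.eq_zero_of_gcd_eq_zero_left h) (by omega)
      have hpp : p.Prime := Nat.minFac_prime hg1
      have hpk : p ∣ k := dvd_trans (Nat.minFac_dvd _) (Nat.gcd_dvd_left _ _)
      have hpa : p ∣ a := dvd_trans (Nat.minFac_dvd _) (Nat.gcd_dvd_right _ _)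
      have h13 : 13 ≤ p := hp p hpp (hpa.mul_right b)
      have : p ≤ k := Nat.le_of_dvd hk0 hpk
      omega
    have hdvd' : a ∣ d.1.val := hcop.symm.dvd_of_dvd_mul_left hdvd
    have hval0 : d.1.val = 0 := by
      rcases Nat.eq_zero_or_pos d.1.val with h | h
      · exact h
      · exact absurd (Nat.le_of_dvd h hdvd') (by have := ZMod.val_lt d.1; omega)
    have hd1 : d.1 = 0 := by
      rw [← ZMod.natCast_zmod_val d.1, hval0, Nat.cast_zero]
    have hd2 : d.2 = 0 := by rw [h1, hd1, map_zero, smul_zero]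
    exact Prod.ext hd1 hd2
  -- pigeonhole
  have hDfin : D.Finite := Set.toFinite D
  by_contra hcon
  push_neg at hcon
  have hbad : ∀ c ∈ Finset.range 13, ∃ d ∈ D, d ≠ 0 ∧ d ∈ (myPhi a b hab c).ker := by
    intro c _
    have := hcon (myPhi a b hab c).ker
      (by rw [ker_eq_zmultiples]; exact zmultiples_cyclic _)
      (by
        have e := (QuotientAddGroup.quotientKerEquivOfSurjective _ (myPhi_surj a b hab c)).symm
        exact isAddCyclic_of_surjective e.toAddMonoidHom
          (by rw [AddEquiv.coe_toAddMonoidHom]; exact e.surjective))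
    rw [Set.not_subset] at this
    obtain ⟨d, ⟨hdG, hdD⟩, hd0⟩ := this
    exact ⟨d, hdD, by simpa using hd0, hdG⟩
  choose f hfD hf0 hfker using hbad
  have hinj : Set.InjOn (fun c : {x // x ∈ Finset.range 13} => f c.1 c.2)
      ↑(Finset.range 13).attach := by
    rintro ⟨c, hc⟩ - ⟨c', hc'⟩ - h
    simp only at h
    by_contra hne
    have hne' : c ≠ c' := by simpa using hne
    have hc13 : c < 13 := Finset.mem_range.mp hc
    have hc'13 : c' < 13 := Finset.mem_range.mp hc'
    rcases Nat.lt_or_ge c' c with hlt | hge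
    · exact hf0 c hc (key c c' hlt (by omega) (f c hc)
        (hfker c hc) (h ▸ hfker c' hc'))
    · have hlt' : c < c' := by omega
      exact hf0 c' hc' (key c' c hlt' (by omega) (f c' hc')
        (hfker c' hc') (h.symm ▸ hfker c hc))
  have hsub : (Finset.range 13).attach.image
      (fun c : {x // x ∈ Finset.range 13} => f c.1 c.2) ⊆ hDfin.toFinset := by
    intro x hx
    simp only [Finset.mem_image] at hx
    obtain ⟨⟨c, hc⟩, -, rfl⟩ := hx
    exact hDfin.mem_toFinset.mpr (hfD c hc)
  have hcard : ((Finset.range 13).attach.image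
      (fun c : {x // x ∈ Finset.range 13} => f c.1 c.2)).card = 13 := by
    rw [Finset.card_image_of_injOn (by simpa using hinj)]
    simp
  have := Finset.card_le_card hsub
  rw [hcard] at this
  rw [Set.ncard_eq_toFinset_card D hDfin] at hD
  omega
end
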